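/- arXiv:1605.02103 — 2 statements merged into one kernel-verified Lean document; each statement's English description precedes it below -/
import Mathlib

section
/- Let Γ be an almost semisimple directed graph of growth λ > 1 and let v be a vertex of small growth. Then there exist c > 0 and λ₁ < λ such that for all n ≥ 0, the number of directed paths of length n starting at v is at most c·λ₁ⁿ. -/
/-!
Decompose `𝟙` into generalized eigenvectors of `M` over `ℂ`. Semisimplicity turns the components
`x_μ` with `‖μ‖ = λ` into genuine eigenvectors, so `(Mⁿ𝟙)_v = Σ_μ μⁿ (x_μ)_v + O(λ₁ⁿ)` for some
`λ₁ < λ`, the error collecting the generalized eigenspaces of smaller modulus. Averaging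
`(Mⁿ𝟙)_v / νⁿ` over `n < N` isolates `(x_ν)_v`, because the Cesàro means of `(μ / ν)ⁿ` vanish for
`μ ≠ ν` on the circle of radius `λ`. That average is dominated in norm by the one defining
`ρ(𝟙)_v = 0`, so every `(x_ν)_v` vanishes and only the `O(λ₁ⁿ)` part is left.
-/

open Filter

/-- The number of directed paths of length `n` starting at vertex `v`, for the graph
with adjacency matrix `M` (with multiplicities): `(Mⁿ 𝟙)_v`. -/
def pathCount {V : Type*} [Fintype V] [DecidableEq V] (M : Matrix V V ℕ) (v : V) (n : ℕ) : ℕ :=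
  (M ^ n).mulVec (fun _ => 1) v

/-- A finite directed graph with adjacency matrix `M` is almost semisimple of growth
`lam > 1` with initial vertex `v0` if every vertex is reachable from `v0`, the largest
modulus of the (complex) eigenvalues of `M` is `lam`, and every eigenvalue of modulus
`lam` has equal geometric and algebraic multiplicity (no nontrivial Jordan blocks:
`ker (M − μ)² = ker (M − μ)`). -/
structure AlmostSemisimple {V : Type*} [Fintype V] [DecidableEq V]
    (M : Matrix V V ℕ) (v0 : V) (lam : ℝ) : Prop where
  growth_gt_one : 1 < lam
  accessible : ∀ v : V, ∃ n : ℕ, (M ^ n) v0 v ≠ 0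
  eigen_le : ∀ μ : ℂ, (Matrix.charpoly (M.map (Nat.cast : ℕ → ℂ))).IsRoot μ →
    ‖μ‖ ≤ lam
  eigen_top : ∃ μ : ℂ, (Matrix.charpoly (M.map (Nat.cast : ℕ → ℂ))).IsRoot μ ∧
    ‖μ‖ = lam
  semisimple_top : ∀ μ : ℂ, ‖μ‖ = lam →
    ∀ x : V → ℂ,
      (M.map (Nat.cast : ℕ → ℂ) - μ • 1).mulVec
          ((M.map (Nat.cast : ℕ → ℂ) - μ • 1).mulVec x) = 0 →
      (M.map (Nat.cast : ℕ → ℂ) - μ • 1).mulVec x = 0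

/-- `ρ1 v` is the Cesàro limit `ρ(𝟙)_v = lim_N (1/N) Σ_{n<N} (Mⁿ𝟙)_v / lamⁿ`. -/
def IsRho1 {V : Type*} [Fintype V] [DecidableEq V] (M : Matrix V V ℕ) (lam : ℝ) (ρ1 : V → ℝ) : Prop :=
  ∀ v : V, Tendsto
    (fun N : ℕ => (N : ℝ)⁻¹ * ∑ n ∈ Finset.range N, (pathCount M v n : ℝ) / lam ^ n)
    atTop (nhds (ρ1 v))

open Topology

theorem Finset.exists_nonneg_lt_of_forall_lt {ι : Type*} {s : Finset ι} {g : ι → ℝ} {b : ℝ}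
    (hb : 0 < b) (hs : ∀ i ∈ s, g i < b) : ∃ a, 0 ≤ a ∧ a < b ∧ ∀ i ∈ s, g i < a := by
  have h : ∀ᶠ a in 𝓝[<] b, 0 < a ∧ a < b ∧ ∀ i ∈ s, g i < a :=
    ((eventually_gt_nhds hb).filter_mono nhdsWithin_le_nhds).and <|
      (eventually_mem_nhdsWithin (a := b) (s := Set.Iio b)).and <|
        (Finset.eventually_all s).2 fun i hi =>
          (eventually_gt_nhds (hs i hi)).filter_mono nhdsWithin_le_nhds
  obtain ⟨a, ha0, hab, hs⟩ := h.exists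
  exact ⟨a, ha0.le, hab, hs⟩

namespace Module.End

section Growth

variable {𝕜 E : Type*} [NormedField 𝕜] [SeminormedAddCommGroup E] [NormedSpace 𝕜 E]

def growthSubmodule (f : End 𝕜 E) (r : ℝ) : Submodule 𝕜 E where
  carrier := {x | ∃ C, ∀ n, ‖(f ^ n) x‖ ≤ C * r ^ n}
  zero_mem' := ⟨0, fun n => by simp⟩
  add_mem' := by
    rintro x y ⟨C, hC⟩ ⟨D, hD⟩
    refine ⟨C + D, fun n => ?_⟩
    rw [map_add, add_mul]
    exact (norm_add_le _ _).trans (add_le_add (hC n) (hD n))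
  smul_mem' := by
    rintro c x ⟨C, hC⟩
    refine ⟨‖c‖ * C, fun n => ?_⟩
    rw [map_smul, norm_smul, mul_assoc]
    exact mul_le_mul_of_nonneg_left (hC n) (norm_nonneg c)

variable {f : End 𝕜 E} {r : ℝ} {μ : 𝕜}

theorem mem_growthSubmodule_of_sub_smul_mem (hμ : ‖μ‖ < r) {x : E}
    (hx : (f - μ • 1) x ∈ f.growthSubmodule r) : x ∈ f.growthSubmodule r := by
  obtain ⟨C, hC⟩ := hx
  have hgap : 0 < r - ‖μ‖ := sub_pos.2 hμ
  set K := max ‖x‖ (C / (r - ‖μ‖))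
  have hK : C + ‖μ‖ * K ≤ K * r := by
    have := (div_le_iff₀ hgap).1 (le_max_right ‖x‖ (C / (r - ‖μ‖)))
    linarith
  refine ⟨K, fun n => ?_⟩
  induction n with
  | zero => simp [K]
  | succ n ih =>
    have hstep : (f ^ (n + 1)) x = (f ^ n) ((f - μ • 1) x) + μ • (f ^ n) x := by
      simp [pow_succ, map_sub, map_smul]
    calc ‖(f ^ (n + 1)) x‖ ≤ C * r ^ n + ‖μ‖ * (K * r ^ n) := by
          rw [hstep]
          refine (norm_add_le _ _).trans (add_le_add (hC n) ?_)
          rw [norm_smul]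
          exact mul_le_mul_of_nonneg_left ih (norm_nonneg μ)
      _ = (C + ‖μ‖ * K) * r ^ n := by ring
      _ ≤ K * r * r ^ n :=
          mul_le_mul_of_nonneg_right hK (pow_nonneg ((norm_nonneg μ).trans hμ.le) n)
      _ = K * r ^ (n + 1) := by ring

theorem maxGenEigenspace_le_growthSubmodule (hμ : ‖μ‖ < r) :
    f.maxGenEigenspace μ ≤ f.growthSubmodule r := by
  intro x hx
  obtain ⟨k, hk⟩ := (mem_maxGenEigenspace f μ x).1 hx
  clear hx
  induction k generalizing x with
  | zero => simp_all
  | succ k ih =>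
    rw [pow_succ, Module.End.mul_apply] at hk
    exact mem_growthSubmodule_of_sub_smul_mem hμ (ih hk)

end Growth

section Semisimple

variable {R M : Type*} [CommRing R] [AddCommGroup M] [Module R M] {f : End R M} {μ : R}

theorem maxGenEigenspace_le_eigenspace
    (h : ∀ x, (f - μ • 1) ((f - μ • 1) x) = 0 → (f - μ • 1) x = 0) :
    f.maxGenEigenspace μ ≤ f.eigenspace μ := by
  intro x hx
  obtain ⟨k, hk⟩ := (mem_maxGenEigenspace f μ x).1 hx
  clear hx
  rw [eigenspace_def, LinearMap.mem_ker]
  induction k generalizing x with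
  | zero => simp_all
  | succ k ih =>
    rw [pow_succ, Module.End.mul_apply] at hk
    exact h x (ih hk)

theorem pow_apply_of_mem_eigenspace {x : M} (hx : x ∈ f.eigenspace μ) (n : ℕ) :
    (f ^ n) x = μ ^ n • x := by
  by_cases hx0 : x = 0
  · simp [hx0]
  · exact HasEigenvector.pow_apply ⟨hx, hx0⟩ n

end Semisimple

variable {𝕜 E : Type*} [NormedField 𝕜] [IsAlgClosed 𝕜] [SeminormedAddCommGroup E]
  [NormedSpace 𝕜 E] [FiniteDimensional 𝕜 E]

theorem exists_sum_eigenspace_sub_mem_growthSubmodule (f : End 𝕜 E) {lam : ℝ} (hlam : 0 < lam)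
    (hle : ∀ μ, f.HasEigenvalue μ → ‖μ‖ ≤ lam)
    (hss : ∀ μ : 𝕜, ‖μ‖ = lam → f.maxGenEigenspace μ ≤ f.eigenspace μ) (y : E) :
    ∃ F : Finset 𝕜, ∃ x : 𝕜 → E, ∃ lam1, 0 ≤ lam1 ∧ lam1 < lam ∧
      (∀ μ ∈ F, ‖μ‖ = lam ∧ x μ ∈ f.eigenspace μ) ∧
      y - ∑ μ ∈ F, x μ ∈ f.growthSubmodule lam1 := by
  obtain ⟨x, hx, rfl⟩ := (Submodule.mem_iSup_iff_exists_finsupp _ y).1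
    (f.iSup_maxGenEigenspace_eq_top ▸ Submodule.mem_top)
  have hsmall : ∀ μ ∈ x.support.filter (‖·‖ ≠ lam), ‖μ‖ < lam := by
    intro μ hμ
    rw [Finset.mem_filter, Finsupp.mem_support_iff] at hμ
    have : f.HasEigenvalue μ :=
      HasUnifEigenvalue.lt zero_lt_one (Submodule.ne_bot_iff _ |>.2 ⟨x μ, hx μ, hμ.1⟩)
    exact (hle μ this).lt_of_ne hμ.2
  obtain ⟨lam1, hlam1, hlam1lt, hgap⟩ := Finset.exists_nonneg_lt_of_forall_lt hlam hsmall
  refine ⟨x.support.filter (‖·‖ = lam), x, lam1, hlam1, hlam1lt, fun μ hμ => ?_, ?_⟩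
  · have hμ := (Finset.mem_filter.1 hμ).2
    exact ⟨hμ, hss μ hμ (hx μ)⟩
  · rw [Finsupp.sum, ← Finset.sum_filter_add_sum_filter_not x.support (‖·‖ = lam),
      add_sub_cancel_left]
    refine Submodule.sum_mem _ fun μ hμ => maxGenEigenspace_le_growthSubmodule ?_ (hx μ)
    exact hgap μ hμ

end Module.End

theorem tendsto_cesaro_pow_of_norm_eq_one {𝕜 : Type*} [NormedField 𝕜] [NormedSpace ℝ 𝕜]
    [DecidableEq 𝕜] {z : 𝕜} (hz : ‖z‖ = 1) :
    Tendsto (fun N : ℕ => (N : ℝ)⁻¹ • ∑ n ∈ Finset.range N, z ^ n) atTop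
      (𝓝 (if z = 1 then 1 else 0)) := by
  split_ifs with hz1
  · simpa [hz1] using (tendsto_const_nhds (x := (1 : 𝕜))).cesaro_smul
  · have hbound : ∀ N : ℕ, ‖∑ n ∈ Finset.range N, z ^ n‖ ≤ 2 / ‖z - 1‖ := fun N => by
      rw [geom_sum_eq hz1, norm_div]
      gcongr
      calc ‖z ^ N - 1‖ ≤ ‖z ^ N‖ + ‖(1 : 𝕜)‖ := norm_sub_le _ _
        _ = 2 := by rw [norm_pow, hz]; norm_num
    have hdecay : Tendsto (fun N : ℕ => (N : ℝ)⁻¹ * (2 / ‖z - 1‖)) atTop (𝓝 0) := by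
      simpa using (tendsto_inv_atTop_nhds_zero_nat (𝕜 := ℝ)).mul_const (2 / ‖z - 1‖)
    refine squeeze_zero_norm (fun N => ?_) hdecay
    rw [norm_smul, Real.norm_of_nonneg (inv_nonneg.2 N.cast_nonneg)]
    exact mul_le_mul_of_nonneg_left (hbound N) (inv_nonneg.2 N.cast_nonneg)

theorem coeff_eq_zero_of_tendsto_cesaro_norm_div_pow {𝕜 : Type*} [NormedField 𝕜]
    [NormedAlgebra ℝ 𝕜] [DecidableEq 𝕜] {F : Finset 𝕜} {lam : ℝ} (hlam : 0 < lam)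
    (hF : ∀ μ ∈ F, ‖μ‖ = lam) {c : 𝕜 → 𝕜} {a e : ℕ → 𝕜}
    (ha : ∀ n, a n = ∑ μ ∈ F, c μ * μ ^ n + e n)
    (he : Tendsto (fun n => ‖e n‖ / lam ^ n) atTop (𝓝 0))
    (h : Tendsto (fun N : ℕ => (N : ℝ)⁻¹ * ∑ n ∈ Finset.range N, ‖a n‖ / lam ^ n) atTop (𝓝 0)) :
    ∀ ν ∈ F, c ν = 0 := by
  intro ν hν
  have hν0 : ν ≠ 0 := norm_pos_iff.1 (hF ν hν ▸ hlam)
  have hterm : ∀ μ ∈ F, Tendsto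
      (fun N : ℕ => c μ * ((N : ℝ)⁻¹ • ∑ n ∈ Finset.range N, (μ / ν) ^ n)) atTop
      (𝓝 (if μ = ν then c μ else 0)) := fun μ hμ => by
    have := (tendsto_cesaro_pow_of_norm_eq_one (z := μ / ν)
      (by rw [norm_div, hF μ hμ, hF ν hν, div_self hlam.ne'])).const_mul (c μ)
    simpa [div_eq_one_iff_eq hν0, apply_ite (c μ * ·)] using this
  have herr : Tendsto (fun N : ℕ => (N : ℝ)⁻¹ • ∑ n ∈ Finset.range N, e n / ν ^ n) atTop
      (𝓝 0) :=
    Tendsto.cesaro_smul (tendsto_zero_iff_norm_tendsto_zero.2 (by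
      simpa [norm_div, norm_pow, hF ν hν] using he))
  have hmean : Tendsto (fun N : ℕ => (N : ℝ)⁻¹ • ∑ n ∈ Finset.range N, a n / ν ^ n) atTop
      (𝓝 (c ν)) := by
    have := (tendsto_finsetSum F hterm).add herr
    rw [Finset.sum_ite_eq' F ν, if_pos hν, add_zero] at this
    refine this.congr fun N => ?_
    simp only [ha, add_div, Finset.sum_div, Finset.sum_add_distrib, smul_add, Finset.smul_sum,
      Finset.mul_sum, div_pow, mul_div_assoc, mul_smul_comm]
    rw [Finset.sum_comm]
  have hbound : ∀ N : ℕ, ‖(N : ℝ)⁻¹ • ∑ n ∈ Finset.range N, a n / ν ^ n‖ ≤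
      (N : ℝ)⁻¹ * ∑ n ∈ Finset.range N, ‖a n‖ / lam ^ n := fun N => by
    rw [norm_smul, Real.norm_of_nonneg (inv_nonneg.2 N.cast_nonneg)]
    refine mul_le_mul_of_nonneg_left ((norm_sum_le _ _).trans_eq ?_) (inv_nonneg.2 N.cast_nonneg)
    simp [norm_div, norm_pow, hF ν hν]
  exact norm_le_zero_iff.1 (le_of_tendsto_of_tendsto' hmean.norm h hbound)

theorem tendsto_div_pow_of_le_mul_pow {u : ℕ → ℝ} {C r lam : ℝ} (hu0 : ∀ n, 0 ≤ u n)
    (hu : ∀ n, u n ≤ C * r ^ n) (hr : 0 ≤ r) (hrlam : r < lam) :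
    Tendsto (fun n => u n / lam ^ n) atTop (𝓝 0) := by
  have hlam : 0 < lam := hr.trans_lt hrlam
  have hgeom : Tendsto (fun n => C * (r / lam) ^ n) atTop (𝓝 0) := by
    simpa using (tendsto_pow_atTop_nhds_zero_of_lt_one (div_nonneg hr hlam.le)
      ((div_lt_one hlam).2 hrlam)).const_mul C
  refine squeeze_zero (fun n => div_nonneg (hu0 n) (pow_pos hlam n).le) (fun n => ?_) hgeom
  rw [div_pow, ← mul_div_assoc]
  exact div_le_div_of_nonneg_right (hu n) (pow_pos hlam n).le

theorem natCast_pathCount {V : Type*} [Fintype V] [DecidableEq V] {R : Type*} [CommSemiring R]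
    (M : Matrix V V ℕ) (v : V) (n : ℕ) :
    (pathCount M v n : R) = ((Matrix.toLin' (M.map (Nat.cast : ℕ → R))) ^ n) 1 v := by
  rw [← Matrix.toLin'_pow, Matrix.toLin'_apply, ← Nat.coe_castRingHom, ← Matrix.map_pow,
    pathCount, RingHom.map_mulVec]
  congr
  ext
  simp

namespace AlmostSemisimple

variable {V : Type*} [Fintype V] [DecidableEq V] {M : Matrix V V ℕ} {v0 : V} {lam : ℝ}

theorem norm_le_of_hasEigenvalue (hAS : AlmostSemisimple M v0 lam) {μ : ℂ}
    (hμ : Module.End.HasEigenvalue (Matrix.toLin' (M.map (Nat.cast : ℕ → ℂ))) μ) :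
    ‖μ‖ ≤ lam := by
  rw [Module.End.hasEigenvalue_iff_isRoot_charpoly, Matrix.charpoly_toLin'] at hμ
  exact hAS.eigen_le μ hμ

theorem maxGenEigenspace_le_eigenspace (hAS : AlmostSemisimple M v0 lam) {μ : ℂ}
    (hμ : ‖μ‖ = lam) :
    Module.End.maxGenEigenspace (Matrix.toLin' (M.map (Nat.cast : ℕ → ℂ))) μ ≤
      Module.End.eigenspace (Matrix.toLin' (M.map (Nat.cast : ℕ → ℂ))) μ := by
  refine Module.End.maxGenEigenspace_le_eigenspace fun y => ?_
  simpa [Matrix.sub_mulVec, Matrix.smul_mulVec] using hAS.semisimple_top μ hμ y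

end AlmostSemisimple

/-- in an almost semisimple graph of growth `lam > 1`, for any vertex `v`
of small growth (`ρ(𝟙)_v = 0`) there are `c > 0` and `0 ≤ lam₁ < lam` with
`#{paths of length n from v} ≤ c·lam₁ⁿ` for all `n`. -/
theorem pathCount_small_growth {V : Type*} [Fintype V] [DecidableEq V]
    (M : Matrix V V ℕ) (v0 : V) (lam : ℝ) (hAS : AlmostSemisimple M v0 lam)
    (ρ1 : V → ℝ) (hρ : IsRho1 M lam ρ1)
    (v : V) (hv : ρ1 v = 0) :
    ∃ c > (0 : ℝ), ∃ lam1 : ℝ, 0 ≤ lam1 ∧ lam1 < lam ∧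
      ∀ n : ℕ, (pathCount M v n : ℝ) ≤ c * lam1 ^ n := by
  set f : Module.End ℂ (V → ℂ) := Matrix.toLin' (M.map (Nat.cast : ℕ → ℂ))
  have hlam : 0 < lam := zero_lt_one.trans hAS.growth_gt_one
  obtain ⟨F, x, lam1, hlam1, hlam1lt, hF, C, hC⟩ :=
    Module.End.exists_sum_eigenspace_sub_mem_growthSubmodule f hlam
      (fun _ => hAS.norm_le_of_hasEigenvalue) (fun _ => hAS.maxGenEigenspace_le_eigenspace) 1
  set e : ℕ → ℂ := fun n => (f ^ n) (1 - ∑ μ ∈ F, x μ) v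
  have hdecomp : ∀ n, (pathCount M v n : ℂ) = ∑ μ ∈ F, x μ v * μ ^ n + e n := fun n => by
    rw [natCast_pathCount, ← add_sub_cancel (∑ μ ∈ F, x μ) (1 : V → ℂ), map_add, map_sum,
      Pi.add_apply, Finset.sum_apply]
    congr 1
    refine Finset.sum_congr rfl fun μ hμ => ?_
    rw [Module.End.pow_apply_of_mem_eigenspace (hF μ hμ).2, Pi.smul_apply, smul_eq_mul, mul_comm]
  have he : ∀ n, ‖e n‖ ≤ C * lam1 ^ n := fun n => (norm_le_pi_norm _ v).trans (hC n)
  have hcoef := coeff_eq_zero_of_tendsto_cesaro_norm_div_pow hlam (fun μ hμ => (hF μ hμ).1)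
    hdecomp (tendsto_div_pow_of_le_mul_pow (fun n => norm_nonneg _) he hlam1 hlam1lt)
    (by simpa [hv] using hρ v)
  refine ⟨max C 1, by positivity, lam1, hlam1, hlam1lt, fun n => ?_⟩
  calc (pathCount M v n : ℝ) = ‖e n‖ := by
        rw [← Complex.norm_natCast, hdecomp, Finset.sum_eq_zero fun μ hμ => by simp [hcoef μ hμ],
          zero_add]
    _ ≤ C * lam1 ^ n := he n
    _ ≤ max C 1 * lam1 ^ n := by gcongr; exact le_max_left C 1
end

section
/- Let Γ be an almost semisimple graph of growth λ with the Markov transition probability μ defined by μ(e) = ρ(𝟙)_j/(λ·ρ(𝟙)_i) for an edge e from a large-growth vertex v_i to v_j. Then for every g in the universal cover with |g| = n whose vertex [g] = v_i has large growth, the n-step Markov measure satisfies ℙⁿ({g}) = (ρ(𝟙)_i/ρ(𝟙)_0)·λ^{−n}, and ℙⁿ({g}) = 0 if [g] has small growth. -/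
/-!
Along an edge `i → j` every path of length `n` from `j` extends to one of length `n + 1`
from `i`, so `(Mⁿ⁺¹𝟙)_i ≥ (Mⁿ𝟙)_j`; passing to Cesàro limits gives `ρ(𝟙)_i ≥ ρ(𝟙)_j / λ`.
Hence large growth propagates backwards along paths: a path ending at a large-growth vertex
stays in the large-growth part, and there the product of the transition probabilities
`ρ(𝟙)_{j} / (λ ρ(𝟙)_{i})` telescopes. A path from `v₀` ending at a small-growth vertex must
cross from large to small growth along some edge, whose probability is `0`.
-/

open Filter

/-- The transition probability of the Markov chain of Calegari–Fujiwara: an edge from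
a large-growth vertex `i` to `j` has probability `ρ(𝟙)_j / (λ·ρ(𝟙)_i)`; edges from
small-growth vertices only loop. -/
noncomputable def muStep {V : Type*} [DecidableEq V] (ρ1 : V → ℝ) (lam : ℝ) (i j : V) : ℝ :=
  if 0 < ρ1 i then ρ1 j / (lam * ρ1 i) else if i = j then 1 else 0

open Finset Topology

theorem Fin.exists_castSucc_and_not_succ {n : ℕ} {P : Fin (n + 1) → Prop} (h0 : P 0)
    (hlast : ¬ P (Fin.last n)) : ∃ k : Fin n, P k.castSucc ∧ ¬ P k.succ := by
  by_contra! h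
  exact hlast (Fin.induction h0 h (Fin.last n))

theorem Fin.prod_succ_div_castSucc {G : Type*} [CommGroupWithZero G] {n : ℕ}
    (f : Fin (n + 1) → G) (hf : ∀ k, f k ≠ 0) :
    ∏ k : Fin n, f k.succ / f k.castSucc = f (Fin.last n) / f 0 := by
  induction n with
  | zero => simp [div_self (hf 0)]
  | succ n ih =>
    rw [Fin.prod_univ_castSucc]
    simp only [Fin.succ_castSucc, Fin.succ_last]
    rw [ih (fun k => f k.castSucc) fun k => hf _]
    simp only [Fin.castSucc_zero]
    rw [div_mul_div_comm, mul_comm, mul_div_mul_right _ _ (hf _)]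

theorem le_of_tendsto_cesaro_of_le_succ {a b : ℕ → ℝ} {A B : ℝ}
    (ha : Tendsto (fun N : ℕ => (N : ℝ)⁻¹ * ∑ n ∈ range N, a n) atTop (𝓝 A))
    (hb : Tendsto (fun N : ℕ => (N : ℝ)⁻¹ * ∑ n ∈ range N, b n) atTop (𝓝 B))
    (hab : ∀ n, a n ≤ b (n + 1)) (hb0 : 0 ≤ b 0) : A ≤ B := by
  have hb' : Tendsto (fun N : ℕ => (1 + (N : ℝ)⁻¹) *
      (((N + 1 : ℕ) : ℝ)⁻¹ * ∑ n ∈ range (N + 1), b n)) atTop (𝓝 B) := by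
    simpa using ((tendsto_const_nhds (x := (1 : ℝ))).add tendsto_inv_atTop_nhds_zero_nat).mul
      (hb.comp (tendsto_add_atTop_nat 1))
  refine le_of_tendsto_of_tendsto' ha hb' fun N => ?_
  rcases Nat.eq_zero_or_pos N with rfl | hN
  · simpa using hb0
  have hsum : ∑ n ∈ range N, a n ≤ ∑ n ∈ range (N + 1), b n := by
    rw [sum_range_succ']
    exact (sum_le_sum fun n _ => hab n).trans (le_add_of_nonneg_right hb0)
  calc (N : ℝ)⁻¹ * ∑ n ∈ range N, a n ≤ (N : ℝ)⁻¹ * ∑ n ∈ range (N + 1), b n := by gcongr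
    _ = _ := by push_cast; field_simp

theorem pathCount_le_pathCount_succ {V : Type*} [Fintype V] [DecidableEq V]
    (M : Matrix V V ℕ) {i j : V} (hij : M i j ≠ 0) (n : ℕ) :
    pathCount M j n ≤ pathCount M i (n + 1) := by
  have hsplit : pathCount M i (n + 1) = ∑ k, M i k * pathCount M k n := by
    rw [pathCount, pow_succ', ← Matrix.mulVec_mulVec]
    rfl
  rw [hsplit]
  calc pathCount M j n ≤ M i j * pathCount M j n :=
      Nat.le_mul_of_pos_left _ (Nat.pos_of_ne_zero hij)
    _ ≤ ∑ k, M i k * pathCount M k n :=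
      single_le_sum (f := fun k => M i k * pathCount M k n) (fun _ _ => Nat.zero_le _) (mem_univ j)

namespace IsRho1

variable {V : Type*} [Fintype V] [DecidableEq V] {M : Matrix V V ℕ} {lam : ℝ} {ρ1 : V → ℝ}

theorem nonneg (hρ : IsRho1 M lam ρ1) (hlam : 0 ≤ lam) (v : V) : 0 ≤ ρ1 v :=
  ge_of_tendsto' (hρ v) fun _ => by positivity

theorem div_le_of_adj (hρ : IsRho1 M lam ρ1) (hlam : 0 < lam) {i j : V} (hij : M i j ≠ 0) :
    ρ1 j / lam ≤ ρ1 i := by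
  refine le_of_tendsto_cesaro_of_le_succ (a := fun n => (pathCount M j n : ℝ) / lam ^ n / lam)
    ?_ (hρ i) (fun n => ?_) (by positivity)
  · simpa only [← sum_div, mul_div_assoc] using (hρ j).div_const lam
  · rw [div_div, ← pow_succ]
    gcongr
    exact_mod_cast pathCount_le_pathCount_succ M hij n

theorem pos_of_adj (hρ : IsRho1 M lam ρ1) (hlam : 0 < lam) {i j : V} (hij : M i j ≠ 0)
    (hj : 0 < ρ1 j) : 0 < ρ1 i :=
  (div_pos hj hlam).trans_le (hρ.div_le_of_adj hlam hij)

theorem pos_along_path (hρ : IsRho1 M lam ρ1) (hlam : 0 < lam) {n : ℕ} {p : Fin (n + 1) → V}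
    (hedges : ∀ k : Fin n, M (p k.castSucc) (p k.succ) ≠ 0) (hlast : 0 < ρ1 (p (Fin.last n))) :
    ∀ k, 0 < ρ1 (p k) :=
  Fin.reverseInduction hlast fun k hk => hρ.pos_of_adj hlam (hedges k) hk

end IsRho1

theorem prod_muStep_eq_of_pos {V : Type*} [DecidableEq V] {ρ1 : V → ℝ} {lam : ℝ}
    {n : ℕ} {p : Fin (n + 1) → V} (hpos : ∀ k, 0 < ρ1 (p k)) :
    ∏ k : Fin n, muStep ρ1 lam (p k.castSucc) (p k.succ) =
      ρ1 (p (Fin.last n)) / ρ1 (p 0) * (lam ^ n)⁻¹ := by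
  calc ∏ k : Fin n, muStep ρ1 lam (p k.castSucc) (p k.succ)
      = ∏ k : Fin n, lam⁻¹ * (ρ1 (p k.succ) / ρ1 (p k.castSucc)) := by
        refine prod_congr rfl fun k _ => ?_
        rw [muStep, if_pos (hpos _), div_mul_eq_div_div_swap, div_eq_inv_mul]
    _ = _ := by
        rw [prod_mul_distrib, Fin.prod_succ_div_castSucc _ fun k => (hpos k).ne', prod_const,
          card_univ, Fintype.card_fin, inv_pow, mul_comm]

/-- for the Markov chain on an almost semisimple graph `Γ` of growth
`λ > 1` started at the initial vertex `v0`, a path `g` of length `n` in the universal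
cover (from `v0`) has probability `ℙⁿ({g}) = (ρ(𝟙)_{[g]}/ρ(𝟙)_0)·λ^{−n}` if its
endpoint `[g]` has large growth, and probability `0` if `[g]` has small growth. -/
theorem markov_measure_formula {V : Type*} [Fintype V] [DecidableEq V]
    (M : Matrix V V ℕ) (lam : ℝ) (hlam : 1 < lam)
    (v0 : V) (ρ1 : V → ℝ) (hρ : IsRho1 M lam ρ1) (hv0 : 0 < ρ1 v0)
    (n : ℕ) (p : Fin (n + 1) → V) (hstart : p 0 = v0)
    (hedges : ∀ k : Fin n, M (p k.castSucc) (p k.succ) ≠ 0) :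
    (0 < ρ1 (p (Fin.last n)) →
      ∏ k : Fin n, muStep ρ1 lam (p k.castSucc) (p k.succ) =
        ρ1 (p (Fin.last n)) / ρ1 v0 * (lam ^ n)⁻¹) ∧
    (ρ1 (p (Fin.last n)) = 0 →
      ∏ k : Fin n, muStep ρ1 lam (p k.castSucc) (p k.succ) = 0) := by
  have hlam₀ : 0 < lam := one_pos.trans hlam
  subst hstart
  refine ⟨fun hlast => prod_muStep_eq_of_pos (hρ.pos_along_path hlam₀ hedges hlast),
    fun hlast => ?_⟩
  obtain ⟨k, hk, hk'⟩ := Fin.exists_castSucc_and_not_succ (P := fun k => 0 < ρ1 (p k)) hv0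
    hlast.not_gt
  have hzero : ρ1 (p k.succ) = 0 := ((hρ.nonneg hlam₀.le _).eq_of_not_lt hk').symm
  exact prod_eq_zero (mem_univ k) (by rw [muStep, if_pos hk, hzero, zero_div])
end
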